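/- For every S ∈ ℕ with S ≥ 1 and every tree T there is an S-cut C of T with |C| ≤ |V(T)|/S. -/

import Mathlib

open SimpleGraph

/-- Vertex set of the complete tripartite graph `K_{n,n,n}`. -/
abbrev TriV (n : ℕ) := (Σ _ : Fin 3, Fin n)

/-- The complete tripartite graph `K_{n,n,n}`. -/
def triK (n : ℕ) : SimpleGraph (TriV n) := completeMultipartiteGraph (fun _ : Fin 3 => Fin n)

/-- The spanning subgraph of a coloured graph formed by the edges of colour `c`. -/
def colSub {V : Type} (G : SimpleGraph V) (col : Sym2 V → Bool) (c : Bool) : SimpleGraph V where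
  Adj u v := G.Adj u v ∧ col s(u, v) = c
  symm := ⟨by
    intro u v h
    refine ⟨h.1.symm, ?_⟩
    rw [Sym2.eq_swap]
    exact h.2⟩
  loopless := ⟨fun v h => G.loopless.irrefl v h.1⟩

/-- The class `𝒦ηₙ` of spanning subgraphs of `K_{n,n,n}` with minimum degree `> (2-η)n`. -/
def KK (n : ℕ) (η : ℝ) (K : SimpleGraph (TriV n)) : Prop :=
  K ≤ triK n ∧ ∀ v : TriV n, (2 - η) * n < (({u | K.Adj v u} : Set (TriV n)).ncard : ℝ)

/-- `M` is a matching in the graph `G`: a set of pairwise vertex-disjoint edges of `G`. -/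
def IsMatching' {V : Type} (G : SimpleGraph V) (M : Finset (Sym2 V)) : Prop :=
  (∀ e ∈ M, e ∈ G.edgeSet) ∧
    ∀ e ∈ M, ∀ f ∈ M, e ≠ f → ∀ v : V, v ∈ e → v ∉ f

/-- `v` is covered by the matching `M`. -/
def MCovers {V : Type} (M : Finset (Sym2 V)) (v : V) : Prop := ∃ e ∈ M, v ∈ e

/-- The matching `M` is connected in `G`: all covered vertices lie in one component of `G`. -/
def MatchConnected {V : Type} (G : SimpleGraph V) (M : Finset (Sym2 V)) : Prop :=
  ∀ u v : V, MCovers M u → MCovers M v → G.Reachable u v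

/-- The matching `M` is odd: the component of `G` containing it has an odd cycle. -/
def MatchOdd {V : Type} (G : SimpleGraph V) (M : Finset (Sym2 V)) : Prop :=
  ∃ (u : V) (p : G.Walk u u), p.IsCycle ∧ Odd p.length ∧
    ∃ v : V, MCovers M v ∧ G.Reachable u v

/-- A coloured graph is `m`-odd if some colour contains an odd connected matching of
size at least `m`. -/
def mOdd (n : ℕ) (K : SimpleGraph (TriV n)) (col : Sym2 (TriV n) → Bool) (m : ℝ) : Prop :=
  ∃ (c : Bool) (M : Finset (Sym2 (TriV n))),
    IsMatching' (colSub K col c) M ∧ MatchConnected (colSub K col c) M ∧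
      MatchOdd (colSub K col c) M ∧ m ≤ (M.card : ℝ)

/-- A fork system of ratio at most `r` in `G`: each element is a fork given by its center
and its (nonempty) set of at most `r` prongs; the forks are pairwise vertex-disjoint. -/
def IsForkSystem {V : Type} (G : SimpleGraph V) (r : ℕ) (F : Finset (V × Finset V)) : Prop :=
  (∀ p ∈ F, p.2.Nonempty ∧ p.1 ∉ p.2 ∧ p.2.card ≤ r ∧ ∀ v ∈ p.2, G.Adj p.1 v) ∧
    ∀ p ∈ F, ∀ q ∈ F, p ≠ q → ∀ v : V, (v = p.1 ∨ v ∈ p.2) → ¬(v = q.1 ∨ v ∈ q.2)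

/-- `v` is covered by the fork system `F`. -/
def FCovers {V : Type} (F : Finset (V × Finset V)) (v : V) : Prop :=
  ∃ p ∈ F, v = p.1 ∨ v ∈ p.2

/-- The fork system `F` is connected in `G`. -/
def ForkConnected {V : Type} (G : SimpleGraph V) (F : Finset (V × Finset V)) : Prop :=
  ∀ u v : V, FCovers F u → FCovers F v → G.Reachable u v

/-- The size of a fork system: the total number of prongs. -/
def forkSize {V : Type} (F : Finset (V × Finset V)) : ℕ := ∑ p ∈ F, p.2.card

/-- A coloured graph is `(m,f,r)`-good if some colour contains a connected matching of size
at least `m` and a connected fork system of ratio at most `r` and size at least `f`. -/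
def Good (n : ℕ) (K : SimpleGraph (TriV n)) (col : Sym2 (TriV n) → Bool)
    (m f : ℝ) (r : ℕ) : Prop :=
  ∃ c : Bool,
    (∃ M, IsMatching' (colSub K col c) M ∧ MatchConnected (colSub K col c) M ∧
      m ≤ (M.card : ℝ)) ∧
    (∃ F, IsForkSystem (colSub K col c) r F ∧ ForkConnected (colSub K col c) F ∧
      f ≤ (forkSize F : ℝ))

/-- `K[D,D']` is `η`-complete w.r.t. `n`: every vertex of either side has at most `ηn`
non-neighbours on the other side. -/
def EtaComplete {V : Type} (K : SimpleGraph V) (n : ℕ) (η : ℝ) (D D' : Finset V) : Prop :=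
  (∀ v ∈ D, (({u | u ∈ D' ∧ ¬K.Adj v u} : Set V).ncard : ℝ) ≤ η * n) ∧
  (∀ v ∈ D', (({u | u ∈ D ∧ ¬K.Adj u v} : Set V).ncard : ℝ) ≤ η * n)

/-- `K[D,D']` is `(η,c)`-complete: `η`-complete and all its edges have colour `c`. -/
def EtaCComplete {V : Type} (K : SimpleGraph V) (col : Sym2 V → Bool) (n : ℕ) (η : ℝ)
    (c : Bool) (D D' : Finset V) : Prop :=
  EtaComplete K n η D D' ∧ ∀ u ∈ D, ∀ v ∈ D', K.Adj u v → col s(u, v) = c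

/-- Pyramid configuration with parameter `η` (Definition (E1)). -/
def PyramidConfig (n : ℕ) (K : SimpleGraph (TriV n)) (col : Sym2 (TriV n) → Bool)
    (η : ℝ) : Prop :=
  ∃ (c c' : Bool) (D1 D2 D1' D2' : Finset (TriV n)),
    Disjoint D1 D2 ∧ Disjoint D1 D1' ∧ Disjoint D1 D2' ∧ Disjoint D2 D1' ∧
      Disjoint D2 D2' ∧ Disjoint D1' D2' ∧
    D1.card ≤ n ∧ D2.card ≤ n ∧ D1'.card ≤ n ∧ D2'.card ≤ n ∧
    (1 - η) * n ≤ (D1.card : ℝ) ∧ (1 - η) * n ≤ (D2.card : ℝ) ∧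
    (1 - η) * n ≤ (D1'.card : ℝ) + (D2'.card : ℝ) ∧
    (D1' = ∅ ∨ 2 * η * n ≤ (D1'.card : ℝ)) ∧
    (D2' = ∅ ∨ 2 * η * n ≤ (D2'.card : ℝ)) ∧
    EtaCComplete K col n η c D1 D1' ∧ EtaCComplete K col n η c D2 D2' ∧
    EtaComplete K n η D1 D2' ∧ EtaComplete K n η D2 D1' ∧ EtaComplete K n η D1 D2 ∧
    (EtaCComplete K col n η c' D1 D2 ∨
      (EtaCComplete K col n η c' D1 D2' ∧ EtaCComplete K col n η c' D1' D2))

/-- Crossing relation of the six bipartite graphs in the spider configuration. -/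
def spiderCross {V : Type} (A1 A2 B1 B2 C1 C2 : Finset V) (u v : V) : Prop :=
  (u ∈ A1 ∧ (v ∈ B2 ∨ v ∈ C2)) ∨ (u ∈ B1 ∧ (v ∈ A2 ∨ v ∈ C2)) ∨
    (u ∈ C1 ∧ (v ∈ A2 ∨ v ∈ B2))

/-- The union of the six bipartite graphs in the spider configuration, as a graph. -/
def spiderGraph {V : Type} (K : SimpleGraph V) (A1 A2 B1 B2 C1 C2 : Finset V) :
    SimpleGraph V where
  Adj u v := K.Adj u v ∧
    (spiderCross A1 A2 B1 B2 C1 C2 u v ∨ spiderCross A1 A2 B1 B2 C1 C2 v u)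
  symm := ⟨by
    intro u v h
    exact ⟨h.1.symm, h.2.symm⟩⟩
  loopless := ⟨fun v h => K.loopless.irrefl v h.1⟩

/-- Spider configuration with parameter `η` (Definition (E2)). -/
def SpiderConfig (n : ℕ) (K : SimpleGraph (TriV n)) (col : Sym2 (TriV n) → Bool)
    (η : ℝ) : Prop :=
  ∃ (c : Bool) (A1 A2 B1 B2 C1 C2 : Finset (TriV n)),
    List.Pairwise Disjoint [A1, A2, B1, B2, C1, C2] ∧
    (1 - η) * n ≤ ((A1 ∪ A2).card : ℝ) ∧ (1 - η) * n ≤ ((B1 ∪ B2).card : ℝ) ∧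
      (1 - η) * n ≤ ((C1 ∪ C2).card : ℝ) ∧
    EtaCComplete K col n η c A1 B2 ∧ EtaCComplete K col n η c A1 C2 ∧
    EtaCComplete K col n η c B1 A2 ∧ EtaCComplete K col n η c B1 C2 ∧
    EtaCComplete K col n η c C1 A2 ∧ EtaCComplete K col n η c C1 B2 ∧
    (∀ u ∈ A1 ∪ B1 ∪ C1 ∪ A2 ∪ B2 ∪ C2, ∀ v ∈ A1 ∪ B1 ∪ C1 ∪ A2 ∪ B2 ∪ C2,
      (spiderGraph K A1 A2 B1 B2 C1 C2).Reachable u v) ∧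
    ∃ AB AC BA BC CA CB CC : Finset (TriV n),
      A2 = AB ∪ AC ∧ Disjoint AB AC ∧
      B2 = BA ∪ BC ∧ Disjoint BA BC ∧
      C2 = CA ∪ CB ∪ CC ∧ Disjoint CA CB ∧ Disjoint CA CC ∧ Disjoint CB CC ∧
      (AB = ∅ ∨ 2 * η * n ≤ (AB.card : ℝ)) ∧ (AC = ∅ ∨ 2 * η * n ≤ (AC.card : ℝ)) ∧
      (BA = ∅ ∨ 2 * η * n ≤ (BA.card : ℝ)) ∧ (BC = ∅ ∨ 2 * η * n ≤ (BC.card : ℝ)) ∧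
      (CA = ∅ ∨ 2 * η * n ≤ (CA.card : ℝ)) ∧ (CB = ∅ ∨ 2 * η * n ≤ (CB.card : ℝ)) ∧
      (CC = ∅ ∨ 2 * η * n ≤ (CC.card : ℝ)) ∧
      B1.card ≤ A1.card ∧ (C1 ∪ CC).card ≤ B1.card ∧
      AB.card = BA.card ∧ (AB.card : ℝ) ≤ n - (C2.card : ℝ) ∧
      AC.card = CA.card ∧ (AC.card : ℝ) ≤ n - (B2.card : ℝ) ∧
      BC.card = CB.card ∧ (BC.card : ℝ) ≤ n - (A2.card : ℝ) ∧
      (CC = ∅ ∨ AB = ∅) ∧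
      (A2 = ∅ ∨ ((A2 ∪ B2 ∪ CA ∪ CB).card : ℝ) ≤ (1 - η) * (3 / 2) * n) ∧
      (C1 = ∅ ∨ ((A1 ∪ B1 ∪ C1).card : ℝ) < (1 - η) * (3 / 2) * n ∨
        ((B1 ∪ C1).card : ℝ) ≤ (1 - η) * (3 / 4) * n)

/-- A coloured graph is `η`-extremal if it is in pyramid or spider configuration. -/
def Extremal (n : ℕ) (K : SimpleGraph (TriV n)) (col : Sym2 (TriV n) → Bool)
    (η : ℝ) : Prop :=
  PyramidConfig n K col η ∨ SpiderConfig n K col η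

/-- The density of the pair of vertex sets `(U,W)` in `G`. -/
noncomputable def density {V : Type} (G : SimpleGraph V) (U W : Finset V) : ℝ :=
  (({p : V × V | p.1 ∈ U ∧ p.2 ∈ W ∧ G.Adj p.1 p.2} : Set (V × V)).ncard : ℝ) /
    ((U.card : ℝ) * (W.card : ℝ))

/-- `(U,W)` is an `(ε,d)`-regular pair in `G`. -/
def IsRegularPair {V : Type} (G : SimpleGraph V) (ε d : ℝ) (U W : Finset V) : Prop :=
  d ≤ density G U W ∧
    ∀ U' ⊆ U, ∀ W' ⊆ W, ε * U.card ≤ (U'.card : ℝ) → ε * W.card ≤ (W'.card : ℝ) →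
      |density G U' W' - density G U W| ≤ ε

/-- `𝔾` is an `(ε,d)`-reduced graph of `G` with partition `V₀ ∪ V₁ ∪ ... ∪ V_k`
given by the bin set `V0` and the clusters `P i`. -/
def IsReducedGraph {V : Type} [Fintype V] (G : SimpleGraph V) (ε d : ℝ) (k : ℕ)
    (GG : SimpleGraph (Fin k)) (V0 : Finset V) (P : Fin k → Finset V) : Prop :=
  (∀ i, Disjoint V0 (P i)) ∧ (∀ i j, i ≠ j → Disjoint (P i) (P j)) ∧
    (∀ v : V, v ∈ V0 ∨ ∃ i, v ∈ P i) ∧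
    ((V0.card : ℝ) ≤ ε * Fintype.card V) ∧
    (∀ i j, (P i).card = (P j).card) ∧
    (∀ i j, GG.Adj i j → IsRegularPair G ε d (P i) (P j))

/-- The graph obtained from `G` by deleting the vertices in `C` (the deleted vertices
remain as isolated vertices). -/
def delVerts {V : Type} (G : SimpleGraph V) (C : Finset V) : SimpleGraph V where
  Adj u v := G.Adj u v ∧ u ∉ C ∧ v ∉ C
  symm := ⟨by
    intro u v h
    exact ⟨h.1.symm, h.2.2, h.2.1⟩⟩
  loopless := ⟨fun v h => G.loopless.irrefl v h.1⟩

/-- `C` is an `S`-cut of `T`: every component of `T - C` has at most `S` vertices. -/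
def IsCut {V : Type} (T : SimpleGraph V) (S : ℝ) (C : Finset V) : Prop :=
  ∀ v : V, v ∉ C →
    ((({u | (delVerts T C).Reachable u v} : Set V).ncard : ℝ)) ≤ S

/-- `h` is a `(ρ,L)`-valid assignment of `T` to `GG`. -/
def ValidAssignment {V W : Type} (T : SimpleGraph V) (GG : SimpleGraph W)
    (ρ L : ℝ) (h : V → W) : Prop :=
  (∀ u v : V, T.Adj u v → GG.Adj (h u) (h v)) ∧
  (∀ x : V, ({i | ∃ y : V, T.Adj x y ∧ h y = i} : Set W).ncard ≤ 2) ∧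
  (∀ i : W, (({x : V | h x = i} : Set V).ncard : ℝ) < (1 - ρ) * L)

/-- The bipartite graph `K[D,D']` formed by the edges of `K` between `D` and `D'`. -/
def bipBetween {V : Type} (K : SimpleGraph V) (D D' : Finset V) : SimpleGraph V where
  Adj u v := K.Adj u v ∧ ((u ∈ D ∧ v ∈ D') ∨ (u ∈ D' ∧ v ∈ D))
  symm := ⟨by
    intro u v h
    refine ⟨h.1.symm, ?_⟩
    rcases h.2 with ⟨hu, hv⟩ | ⟨hu, hv⟩
    · exact Or.inr ⟨hv, hu⟩
    · exact Or.inl ⟨hv, hu⟩⟩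
  loopless := ⟨fun v h => K.loopless.irrefl v h.1⟩

/-!
Walking down a large component of the forest, move from a vertex `v` to the attachment vertex `w`
of a component of `T - v` with more than `S` vertices. Since `T` is acyclic, that component meets
`v` in the single edge `wv`, so it is again a union of branches at `w`, and it is smaller. The walk
ends at a vertex `v` with a union `U` of branches at `v`, all of size at most `S`, and `|U| ≥ S`.
Putting `v` into the cut separates these branches; removing `{v} ∪ U` (at least `S + 1` vertices)
and recursing, every cut vertex is paid for by `S + 1` vertices, so `(S + 1) |C| ≤ |V(T)|`.
-/

namespace SimpleGraph

open Finset

variable {V : Type} {G : SimpleGraph V}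

lemma delVerts_le (X : Finset V) : delVerts G X ≤ G := fun _ _ h => h.1

lemma delVerts_anti {X Y : Finset V} (h : X ⊆ Y) : delVerts G Y ≤ delVerts G X :=
  fun _ _ hadj => ⟨hadj.1, fun hx => hadj.2.1 (h hx), fun hx => hadj.2.2 (h hx)⟩

lemma eq_or_notMem_of_reachable_delVerts {X : Finset V} {a b : V}
    (h : (delVerts G X).Reachable a b) : a = b ∨ b ∉ X := by
  obtain ⟨p⟩ := h.symm
  cases p with
  | nil => exact .inl rfl
  | cons hadj _ => exact .inr hadj.2.1

lemma delVerts_singleton_le_deleteEdges {v : V} {e : Sym2 V} (hv : v ∈ e) :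
    delVerts G {v} ≤ G.deleteEdges {e} := by
  rintro a b ⟨hab, ha, hb⟩
  refine deleteEdges_adj.2 ⟨hab, ?_⟩
  rintro rfl
  rcases Sym2.mem_iff.1 hv with rfl | rfl <;> simp_all

/-- Both walks avoid the edge `wv`, so together they would contradict that `wv` is a bridge. -/
lemma IsAcyclic.not_reachable_delVerts (hG : G.IsAcyclic) {u v w : V} (hwv : G.Adj w v)
    (hw : (delVerts G {v}).Reachable u w) : ¬(delVerts G {w}).Reachable u v := fun hv =>
  isAcyclic_iff_forall_adj_isBridge.mp hG hwv <|
    (hw.symm.mono (delVerts_singleton_le_deleteEdges (Sym2.mem_mk_right w v))).trans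
      (hv.mono (delVerts_singleton_le_deleteEdges (Sym2.mem_mk_left w v)))

variable [DecidableEq V]

lemma delVerts_delVerts (X Y : Finset V) :
    delVerts (delVerts G X) Y = delVerts G (X ∪ Y) := by
  ext a b
  simp only [delVerts, mem_union]
  tauto

lemma reachable_delVerts_union {X Y : Finset V} {a b : V} (p : (delVerts G X).Walk a b)
    (hp : ∀ y ∈ p.support, y ∉ Y) : (delVerts G (X ∪ Y)).Reachable a b := by
  induction p with
  | nil => rfl
  | cons h q ih =>
    simp only [Walk.support_cons, List.mem_cons, forall_eq_or_imp] at hp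
    refine .trans (Adj.reachable ⟨h.1, ?_, ?_⟩) (ih hp.2)
    · simp [h.2.1, hp.1]
    · simp [h.2.2, hp.2 _ q.start_mem_support]

lemma Reachable.exists_adj_delVerts {x v : V} (h : G.Reachable x v) (hxv : x ≠ v) :
    ∃ w, G.Adj w v ∧ (delVerts G {v}).Reachable x w := by
  obtain ⟨p⟩ := h
  induction p with
  | nil => exact absurd rfl hxv
  | @cons x y z hxy q ih =>
    by_cases hyz : y = z
    · exact ⟨x, hyz ▸ hxy, .rfl⟩
    · obtain ⟨w, hwz, hyw⟩ := ih hyz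
      have hxy' : (delVerts G {z}).Adj x y := ⟨hxy, by simpa using hxv, by simpa using hyz⟩
      exact ⟨w, hwz, hxy'.reachable.trans hyw⟩

/-- `U` is a union of components of `G - v`, each of them attached to `v`. -/
structure IsBranchSet (G : SimpleGraph V) (v : V) (U : Finset V) : Prop where
  notMem : v ∉ U
  reachable : ∀ u ∈ U, G.Reachable u v
  closed : ∀ u ∈ U, ∀ y, (delVerts G {v}).Reachable u y → y ∈ U

lemma exists_isBranchSet_insert_eq [Finite V] (r : V) :
    ∃ U, IsBranchSet G r U ∧ (↑(insert r U) : Set V) = {u | G.Reachable u r} := by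
  set K := (Set.toFinite {u | G.Reachable u r}).toFinset
  have hK : ∀ u, u ∈ K ↔ G.Reachable u r := by simp [K]
  refine ⟨K.erase r, ⟨notMem_erase r K, fun u hu => (hK u).1 (mem_of_mem_erase hu),
    fun u hu y huy => ?_⟩, ?_⟩
  · obtain ⟨hur, huK⟩ := mem_erase.1 hu
    refine mem_erase.2 ⟨?_, (hK y).2 ?_⟩
    · rcases eq_or_notMem_of_reachable_delVerts huy with rfl | hy
      · exact hur
      · simpa using hy
    · exact (huy.mono (delVerts_le _)).symm.trans ((hK u).1 huK)
  · rw [insert_erase ((hK r).2 .rfl)]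
    simp [K]

lemma IsBranchSet.exists_child (hG : G.IsAcyclic) {v x : V} {U : Finset V}
    (hU : IsBranchSet G v U) (hx : x ∈ U) :
    ∃ w D, D ⊆ U ∧ (↑D : Set V) = {y | (delVerts G {v}).Reachable y x} ∧ w ∈ D ∧
      G.Adj w v ∧ IsBranchSet G w (D.erase w) := by
  classical
  obtain ⟨w, hwv, hxw⟩ :=
    (hU.reachable x hx).exists_adj_delVerts (ne_of_mem_of_not_mem hx hU.notMem)
  have hDU : ∀ y, (delVerts G {v}).Reachable y x → y ∈ U :=
    fun y hy => hU.closed x hx y hy.symm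
  refine ⟨w, U.filter ((delVerts G {v}).Reachable · x), filter_subset _ _, ?_,
    mem_filter.2 ⟨hDU w hxw.symm, hxw.symm⟩, hwv, notMem_erase w _, ?_, ?_⟩
  · ext y
    simpa using hDU y
  · intro u hu
    exact (((mem_filter.1 (mem_of_mem_erase hu)).2.trans hxw).mono (delVerts_le _))
  · intro u hu y huy
    obtain ⟨huw, huD⟩ := mem_erase.1 hu
    have hux := (mem_filter.1 huD).2
    have hyw : y ≠ w := by
      rcases eq_or_notMem_of_reachable_delVerts huy with rfl | hy
      · exact huw
      · simpa using hy
    obtain ⟨p⟩ := huy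
    have hvp : ∀ y ∈ p.support, y ∉ ({v} : Finset V) := fun y hy hyv => by
      rw [mem_singleton] at hyv
      subst hyv
      exact hG.not_reachable_delVerts hwv (hux.trans hxw) (p.takeUntil _ hy).reachable
    have huy' : (delVerts G {v}).Reachable u y :=
      (reachable_delVerts_union p hvp).mono (delVerts_anti subset_union_right)
    exact mem_erase.2 ⟨hyw, mem_filter.2 ⟨hDU y (huy'.symm.trans hux), huy'.symm.trans hux⟩⟩

theorem IsBranchSet.exists_small_components (hG : G.IsAcyclic) {S : ℕ} {v : V}
    {U : Finset V} (hU : IsBranchSet G v U) (hS : S ≤ #U) :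
    ∃ v' U', IsBranchSet G v' U' ∧ S ≤ #U' ∧ G.Reachable v' v ∧
      ∀ u ∈ U', {y | (delVerts G {v'}).Reachable y u}.ncard ≤ S := by
  by_cases hsmall : ∀ u ∈ U, {y | (delVerts G {v}).Reachable y u}.ncard ≤ S
  · exact ⟨v, U, hU, hS, .rfl, hsmall⟩
  push Not at hsmall
  obtain ⟨x, hx, hbig⟩ := hsmall
  obtain ⟨w, D, hDU, hD, hwD, hwv, hw⟩ := hU.exists_child hG hx
  rw [← hD, Set.ncard_coe_finset] at hbig
  have hlt : #(D.erase w) < #U :=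
    (card_erase_lt_of_mem hwD).trans_le (card_le_card hDU)
  obtain ⟨v', U', hU', hSU', hv'w, hsmall'⟩ :=
    hw.exists_small_components hG (S := S) (by rw [card_erase_of_mem hwD]; omega)
  exact ⟨v', U', hU', hSU', hv'w.trans hwv.reachable, hsmall'⟩
termination_by #U

lemma isCut_union_insert [Finite V] {S : ℕ} {X C U : Finset V} {v : V}
    (hU : IsBranchSet (delVerts G X) v U)
    (hsmall : ∀ u ∈ U, {y | (delVerts (delVerts G X) {v}).Reachable y u}.ncard ≤ S)
    (hC : IsCut G S (X ∪ insert v U ∪ C)) : IsCut G S (X ∪ insert v C) := by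
  have hclosed := hU.closed
  simp only [delVerts_delVerts] at hsmall hclosed
  have hv : X ∪ {v} ⊆ X ∪ insert v C :=
    union_subset_union_right (singleton_subset_iff.2 (mem_insert_self v C))
  intro x hx
  by_cases hxU : x ∈ U
  · refine le_trans (Nat.cast_le.2 (Set.ncard_le_ncard ?_)) (Nat.cast_le.2 (hsmall x hxU))
    exact fun u hu => hu.mono (delVerts_anti hv)
  · refine le_trans (Nat.cast_le.2 (Set.ncard_le_ncard ?_)) (hC x (by simp_all))
    rintro u ⟨p⟩
    have hpU : ∀ y ∈ p.support, y ∉ U := fun y hy hyU =>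
      hxU <| hclosed y hyU x <| (p.dropUntil y hy).reachable.mono (delVerts_anti hv)
    refine (reachable_delVerts_union p hpU).mono (delVerts_anti ?_)
    intro y
    simp only [mem_union, mem_insert]
    tauto

theorem exists_isCut_union [Fintype V] (hG : G.IsAcyclic) (S : ℕ) (X : Finset V) :
    ∃ C : Finset V, (S + 1) * #C ≤ #Xᶜ ∧ IsCut G S (X ∪ C) := by
  by_cases hX : IsCut G S X
  · exact ⟨∅, by simp, by simpa⟩
  obtain ⟨r, hrX, hbig⟩ : ∃ r ∉ X, S < {u | (delVerts G X).Reachable u r}.ncard := by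
    simpa [IsCut] using hX
  obtain ⟨U₀, hU₀, hK⟩ := exists_isBranchSet_insert_eq (G := delVerts G X) r
  rw [← hK, Set.ncard_coe_finset, card_insert_of_notMem hU₀.notMem] at hbig
  obtain ⟨v, U, hU, hSU, hvr, hsmall⟩ :=
    hU₀.exists_small_components (hG.anti (delVerts_le X)) (S := S) (by omega)
  have hWX : Disjoint (insert v U) X := by
    refine Finset.disjoint_left.2 fun y hy hyX => ?_
    have hyr : (delVerts G X).Reachable y r := by
      rcases mem_insert.1 hy with rfl | hyU
      · exact hvr
      · exact (hU.reachable y hyU).trans hvr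
    rcases eq_or_notMem_of_reachable_delVerts hyr.symm with rfl | hy
    · exact hrX hyX
    · exact hy hyX
  have hcard : #(X ∪ insert v U)ᶜ + (#U + 1) = #Xᶜ := by
    rw [compl_union, ← sdiff_eq_inter_compl, ← card_insert_of_notMem hU.notMem]
    exact card_sdiff_add_card_eq_card (subset_compl_iff_disjoint_right.2 hWX)
  obtain ⟨C, hC, hcut⟩ := exists_isCut_union hG S (X ∪ insert v U)
  refine ⟨insert v C, ?_, isCut_union_insert hU hsmall hcut⟩
  nlinarith [card_insert_le v C]
termination_by #Xᶜ
decreasing_by omega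

end SimpleGraph

/-- Lemma 5.1. Every tree `T` has an `S`-cut of size at most `|V(T)|/S`. -/
theorem stmt7 {β : Type} [Fintype β] (T : SimpleGraph β) (hT : T.IsTree)
    (S : ℕ) (hS : 1 ≤ S) :
    ∃ C : Finset β, IsCut T (S : ℝ) C ∧ (C.card : ℝ) ≤ (Fintype.card β : ℝ) / S := by
  classical
  obtain ⟨C, hC, hcut⟩ := SimpleGraph.exists_isCut_union hT.isAcyclic S ∅
  refine ⟨C, by simpa using hcut, ?_⟩
  rw [Finset.compl_empty, Finset.card_univ] at hC
  rw [le_div_iff₀ (by exact_mod_cast hS)]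
  exact_mod_cast (by nlinarith : C.card * S ≤ Fintype.card β)
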